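/- arXiv:1409.4004 — 2 statements merged into one kernel-verified Lean document; each statement's English description precedes it below -/
import Mathlib

section
/- For all real numbers y with 0 ≤ y < 1, the inequality (3 - 2√2·√y)² / (1 - y) ≥ 1 holds, with equality if and only if y = 8/9. -/
/-! With `s = √(2y)` one has `1 - y = 1 - s²/2`, and
`(3 - 2s)² - (1 - s²/2) = (3s - 4)² / 2`, a perfect square vanishing only at `s = 4/3`,
that is at `y = 8/9`. -/

theorem sq_three_sub_two_sqrt_two_mul_sqrt_sub_one_sub {y : ℝ} (hy : 0 ≤ y) :
    (3 - 2 * √2 * √y) ^ 2 - (1 - y) = (3 * √(2 * y) - 4) ^ 2 / 2 := by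
  have hs : √(2 * y) ^ 2 = 2 * y := Real.sq_sqrt (by positivity)
  rw [mul_assoc, ← Real.sqrt_mul zero_le_two]
  linear_combination (-1 / 2 : ℝ) * hs

theorem three_mul_sqrt_two_mul_eq_four_iff {y : ℝ} (hy : 0 ≤ y) :
    3 * √(2 * y) = 4 ↔ y = 8 / 9 := by
  rw [mul_comm, ← eq_div_iff three_ne_zero, Real.sqrt_eq_iff_eq_sq (by positivity) (by norm_num)]
  constructor <;> intro h <;> linarith

/-- For all real `y` with `0 ≤ y < 1`, `(3 - 2√2·√y)² / (1 - y) ≥ 1`,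
with equality iff `y = 8/9`. -/
theorem stmt_0 (y : ℝ) (h0 : 0 ≤ y) (h1 : y < 1) :
    1 ≤ (3 - 2 * Real.sqrt 2 * Real.sqrt y) ^ 2 / (1 - y) ∧
      ((3 - 2 * Real.sqrt 2 * Real.sqrt y) ^ 2 / (1 - y) = 1 ↔ y = 8 / 9) := by
  have hden : 0 < 1 - y := by linarith
  have key := sq_three_sub_two_sqrt_two_mul_sqrt_sub_one_sub h0
  constructor
  · rw [le_div_iff₀ hden, one_mul, ← sub_nonneg, key]
    positivity
  · rw [div_eq_one_iff_eq hden.ne', ← sub_eq_zero, key, div_eq_zero_iff, or_iff_left two_ne_zero,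
      pow_eq_zero_iff two_ne_zero, sub_eq_zero, three_mul_sqrt_two_mul_eq_four_iff h0]
end

section
/- Let ψ: U → ℝ be a smooth function on an open connected subset U ⊆ ℝ⁴ (coordinates x, y, z, t) satisfying: (1) ψ_xx − ψ_tt = −ψ/2; (3) ψ_xy + x·ψ_xz + ψ_z/2 + ψ_zt = 0; (4) ψ_xz + ψ_y/2 + x·ψ_z/2 − ψ_yt − x·ψ_zt = 0; (5) ψ_yz + x·ψ_zz − ψ_x/2 = 0; and ψ_t = 0. Then ψ_x = 0 on U. -/
/-- Partial derivative of `f : ℝ⁴ → ℝ` in the direction `v`. -/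
noncomputable def pd (v : ℝ × ℝ × ℝ × ℝ) (f : ℝ × ℝ × ℝ × ℝ → ℝ) :
    ℝ × ℝ × ℝ × ℝ → ℝ :=
  fun p => fderiv ℝ f p v

def ex : ℝ × ℝ × ℝ × ℝ := (1, 0, 0, 0)
def ey : ℝ × ℝ × ℝ × ℝ := (0, 1, 0, 0)
def ez : ℝ × ℝ × ℝ × ℝ := (0, 0, 1, 0)
def et : ℝ × ℝ × ℝ × ℝ := (0, 0, 0, 1)

open Topology

private lemma pd_congr' {U : Set (ℝ × ℝ × ℝ × ℝ)} (hU : IsOpen U)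
    {f g : ℝ × ℝ × ℝ × ℝ → ℝ} (h : ∀ q ∈ U, f q = g q)
    {p : ℝ × ℝ × ℝ × ℝ} (hp : p ∈ U) (v : ℝ × ℝ × ℝ × ℝ) :
    pd v f p = pd v g p := by
  have he : f =ᶠ[𝓝 p] g := Filter.eventually_of_mem (hU.mem_nhds hp) h
  simp only [pd, he.fderiv_eq]

private lemma pd_zero' {U : Set (ℝ × ℝ × ℝ × ℝ)} (hU : IsOpen U)
    {g : ℝ × ℝ × ℝ × ℝ → ℝ} (h : ∀ q ∈ U, g q = 0)
    {p : ℝ × ℝ × ℝ × ℝ} (hp : p ∈ U) (v : ℝ × ℝ × ℝ × ℝ) :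
    pd v g p = 0 := by
  rw [pd_congr' hU (g := fun _ => (0 : ℝ)) h hp v]
  simp [pd]

private lemma pd_smooth {U : Set (ℝ × ℝ × ℝ × ℝ)} (hU : IsOpen U)
    {f : ℝ × ℝ × ℝ × ℝ → ℝ} (hf : ContDiffOn ℝ (⊤ : ℕ∞) f U) (v : ℝ × ℝ × ℝ × ℝ) :
    ContDiffOn ℝ (⊤ : ℕ∞) (pd v f) U := by
  have h := hf.fderiv_of_isOpen hU (m := ((⊤ : ℕ∞) : WithTop ℕ∞)) (by exact_mod_cast le_top)
  exact h.clm_apply contDiffOn_const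

private lemma pd_diffAt {U : Set (ℝ × ℝ × ℝ × ℝ)} (hU : IsOpen U)
    {f : ℝ × ℝ × ℝ × ℝ → ℝ} (hf : ContDiffOn ℝ (⊤ : ℕ∞) f U)
    {p : ℝ × ℝ × ℝ × ℝ} (hp : p ∈ U) : DifferentiableAt ℝ f p :=
  (hf.contDiffAt (hU.mem_nhds hp)).differentiableAt (by simp)

private lemma pd_symm {U : Set (ℝ × ℝ × ℝ × ℝ)} (hU : IsOpen U)
    {f : ℝ × ℝ × ℝ × ℝ → ℝ} (hf : ContDiffOn ℝ (⊤ : ℕ∞) f U)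
    {p : ℝ × ℝ × ℝ × ℝ} (hp : p ∈ U) (v w : ℝ × ℝ × ℝ × ℝ) :
    pd v (pd w f) p = pd w (pd v f) p := by
  have hd : DifferentiableAt ℝ (fderiv ℝ f) p :=
    ((hf.fderiv_of_isOpen hU (m := ((⊤ : ℕ∞) : WithTop ℕ∞)) (by exact_mod_cast le_top)).differentiableOn
      (by simp)).differentiableAt (hU.mem_nhds hp)
  have key : ∀ u w : ℝ × ℝ × ℝ × ℝ, pd u (pd w f) p = fderiv ℝ (fderiv ℝ f) p u w := by
    intro u w
    have : pd w f = fun q => (fderiv ℝ f q) w := rfl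
    rw [this]
    have := fderiv_clm_apply (c := fderiv ℝ f) (u := fun _ => w) hd
      (differentiableAt_const w)
    simp only [fderiv_fun_const, Pi.zero_apply] at this
    simp [pd, this]
  have hsymm : IsSymmSndFDerivAt ℝ f p :=
    (hf.contDiffAt (hU.mem_nhds hp)).isSymmSndFDerivAt (by rw [minSmoothness_of_isRCLikeNormedField]; exact WithTop.coe_le_coe.2 le_top)
  rw [key v w, key w v, hsymm v w]

private lemma pd_add' {f g : ℝ × ℝ × ℝ × ℝ → ℝ} {p : ℝ × ℝ × ℝ × ℝ}
    (hf : DifferentiableAt ℝ f p) (hg : DifferentiableAt ℝ g p) (v : ℝ × ℝ × ℝ × ℝ) :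
    pd v (fun q => f q + g q) p = pd v f p + pd v g p := by
  simp [pd, fderiv_fun_add hf hg]

private lemma pd_const_mul' {f : ℝ × ℝ × ℝ × ℝ → ℝ} {p : ℝ × ℝ × ℝ × ℝ}
    (hf : DifferentiableAt ℝ f p) (c : ℝ) (v : ℝ × ℝ × ℝ × ℝ) :
    pd v (fun q => c * f q) p = c * pd v f p := by
  simp [pd, fderiv_const_mul hf c]

private lemma pd_mul' {f g : ℝ × ℝ × ℝ × ℝ → ℝ} {p : ℝ × ℝ × ℝ × ℝ}
    (hf : DifferentiableAt ℝ f p) (hg : DifferentiableAt ℝ g p) (v : ℝ × ℝ × ℝ × ℝ) :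
    pd v (fun q => f q * g q) p = f p * pd v g p + g p * pd v f p := by
  simp [pd, fderiv_fun_mul hf hg]

private lemma pd_fst' {p : ℝ × ℝ × ℝ × ℝ} (v : ℝ × ℝ × ℝ × ℝ) :
    pd v (fun q : ℝ × ℝ × ℝ × ℝ => q.1) p = v.1 := by
  have : (fun q : ℝ × ℝ × ℝ × ℝ => q.1) = Prod.fst := rfl
  simp [pd, this, fderiv_fst]

/-- If a smooth `ψ` on an open connected `U ⊆ ℝ⁴` satisfies equations
(1), (3), (4), (5) of Lemma 6.1 together with `ψ_t = 0`, then `ψ_x = 0` on `U`. -/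
theorem stmt_9 (U : Set (ℝ × ℝ × ℝ × ℝ)) (hU : IsOpen U) (hUconn : IsConnected U)
    (ψ : ℝ × ℝ × ℝ × ℝ → ℝ) (hψ : ContDiffOn ℝ (⊤ : ℕ∞) ψ U)
    (h1 : ∀ p ∈ U, pd ex (pd ex ψ) p - pd et (pd et ψ) p = -ψ p / 2)
    (h3 : ∀ p ∈ U,
      pd ey (pd ex ψ) p + p.1 * pd ez (pd ex ψ) p + pd ez ψ p / 2
        + pd et (pd ez ψ) p = 0)
    (h4 : ∀ p ∈ U,
      pd ez (pd ex ψ) p + pd ey ψ p / 2 + p.1 * pd ez ψ p / 2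
        - pd et (pd ey ψ) p - p.1 * pd et (pd ez ψ) p = 0)
    (h5 : ∀ p ∈ U,
      pd ez (pd ey ψ) p + p.1 * pd ez (pd ez ψ) p - pd ex ψ p / 2 = 0)
    (ht : ∀ p ∈ U, pd et ψ p = 0) :
    ∀ p ∈ U, pd ex ψ p = 0 := by
  -- smoothness of derivatives
  have sm1 : ∀ v, ContDiffOn ℝ (⊤ : ℕ∞) (pd v ψ) U := fun v => pd_smooth hU hψ v
  have sm2 : ∀ v w, ContDiffOn ℝ (⊤ : ℕ∞) (pd v (pd w ψ)) U := fun v w => pd_smooth hU (sm1 w) v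
  -- all t-derivatives vanish
  have z1 : ∀ v, ∀ q ∈ U, pd v (pd et ψ) q = 0 := fun v q hq => pd_zero' hU ht hq v
  have z2 : ∀ v, ∀ q ∈ U, pd et (pd v ψ) q = 0 := fun v q hq =>
    (pd_symm hU hψ hq et v).trans (z1 v q hq)
  -- simplified equations
  have e1 : ∀ q ∈ U, pd ex (pd ex ψ) q = -ψ q / 2 := by
    intro q hq; have := h1 q hq; have := z1 et q hq; linarith
  have e3 : ∀ q ∈ U,
      pd ey (pd ex ψ) q + q.1 * pd ez (pd ex ψ) q + pd ez ψ q / 2 = 0 := by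
    intro q hq; have := h3 q hq; have := z2 ez q hq; linarith
  have e4 : ∀ q ∈ U,
      pd ez (pd ex ψ) q + pd ey ψ q / 2 + q.1 * pd ez ψ q / 2 = 0 := by
    intro q hq
    have := h4 q hq; have h' := z2 ey q hq; have h'' := z2 ez q hq
    rw [h', h''] at this; linarith [this]
  -- F := 2 ψ_xz + ψ_y + x ψ_z vanishes on U
  set F : ℝ × ℝ × ℝ × ℝ → ℝ :=
    fun q => (2 * pd ez (pd ex ψ) q + pd ey ψ q) + q.1 * pd ez ψ q with hFdef
  have hF : ∀ q ∈ U, F q = 0 := by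
    intro q hq; have := e4 q hq; simp only [hFdef]; linarith
  -- ψ_z = 0 on U
  have hz : ∀ q ∈ U, pd ez ψ q = 0 := by
    intro p hp
    have dA : DifferentiableAt ℝ (pd ez (pd ex ψ)) p := pd_diffAt hU (sm2 ez ex) hp
    have dB : DifferentiableAt ℝ (pd ey ψ) p := pd_diffAt hU (sm1 ey) hp
    have dC : DifferentiableAt ℝ (pd ez ψ) p := pd_diffAt hU (sm1 ez) hp
    have h0 : pd ex F p = 0 := pd_zero' hU hF hp ex
    have hexp : pd ex F p =
        (2 * pd ex (pd ez (pd ex ψ)) p + pd ex (pd ey ψ) p)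
          + (p.1 * pd ex (pd ez ψ) p + pd ez ψ p * ex.1) := by
      rw [hFdef]
      rw [pd_add' (((dA.const_mul 2)).fun_add dB) (differentiableAt_fst.fun_mul dC) ex]
      rw [pd_add' (dA.const_mul 2) dB ex, pd_const_mul' dA 2 ex]
      rw [pd_mul' differentiableAt_fst dC ex, pd_fst']
    -- third derivative: pd ex (pd ez (pd ex ψ)) = pd ez (pd ex (pd ex ψ)) = -ψ_z/2
    have hthird : pd ex (pd ez (pd ex ψ)) p = -pd ez ψ p / 2 := by
      rw [pd_symm hU (sm1 ex) hp ex ez]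
      rw [pd_congr' hU (g := fun q => (-(2 : ℝ)⁻¹) * ψ q)
        (fun q hq => by rw [e1 q hq]; ring) hp ez]
      rw [pd_const_mul' (pd_diffAt hU hψ hp) _ ez]
      ring
    have hsy : pd ex (pd ey ψ) p = pd ey (pd ex ψ) p := pd_symm hU hψ hp ex ey
    have hsz : pd ex (pd ez ψ) p = pd ez (pd ex ψ) p := pd_symm hU hψ hp ex ez
    have hex1 : ex.1 = 1 := rfl
    rw [hexp, hthird, hsy, hsz, hex1] at h0
    have := e3 p hp
    nlinarith [h0, this]
  -- ψ_xz = 0 on U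
  have hxz : ∀ q ∈ U, pd ez (pd ex ψ) q = 0 := fun q hq =>
    (pd_symm hU hψ hq ez ex).trans (pd_zero' hU hz hq ex)
  -- ψ_y = 0 on U
  have hy : ∀ q ∈ U, pd ey ψ q = 0 := by
    intro q hq
    have := e4 q hq
    rw [hz q hq, hxz q hq] at this
    linarith [this]
  -- conclude
  intro p hp
  have := h5 p hp
  rw [pd_zero' hU hy hp ez, pd_zero' hU hz hp ez] at this
  linarith [this]
end
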